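/- Let u be a smooth strictly plurisubharmonic function on an open set Ω ⊆ ℂ^n satisfying det(u_{ij̄}) = e^{(n+1)u} on Ω, and set A = (u_{ij̄}), B = (u_{ij}). Then, as an identity of n×n matrix-valued functions on Ω, u^{ij̄} ∂_i∂_{j̄} B = u^{ij̄} (∂_i A)·A⁻¹·(∂_{j̄} B) + (n+1)B (summation over i, j). -/

import Mathlib

open Complex Matrix
open scoped ComplexOrder

noncomputable section

/-- Wirtinger derivative `∂/∂z_j` of a complex-valued function on `ℂⁿ`. -/
def wdz {n : ℕ} (f : (Fin n → ℂ) → ℂ) (j : Fin n) (z : Fin n → ℂ) : ℂ :=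
  (fderiv ℝ f z (Pi.single j 1) - Complex.I * fderiv ℝ f z (Pi.single j Complex.I)) / 2

/-- Wirtinger derivative `∂/∂z̄_j` of a complex-valued function on `ℂⁿ`. -/
def wdzbar {n : ℕ} (f : (Fin n → ℂ) → ℂ) (j : Fin n) (z : Fin n → ℂ) : ℂ :=
  (fderiv ℝ f z (Pi.single j 1) + Complex.I * fderiv ℝ f z (Pi.single j Complex.I)) / 2

/-- A real-valued function on `ℂⁿ` viewed as complex-valued. -/
def cplx {n : ℕ} (u : (Fin n → ℂ) → ℝ) : (Fin n → ℂ) → ℂ := fun z => (u z : ℂ)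

/-- The complex Hessian `A = (u_{ij̄}) = (∂_i ∂_{j̄} u)`. -/
def hessA {n : ℕ} (u : (Fin n → ℂ) → ℝ) (z : Fin n → ℂ) : Matrix (Fin n) (Fin n) ℂ :=
  Matrix.of fun i j => wdz (wdzbar (cplx u) j) i z

/-- The matrix `B = (u_{ij}) = (∂_i ∂_j u)`. -/
def hessB {n : ℕ} (u : (Fin n → ℂ) → ℝ) (z : Fin n → ℂ) : Matrix (Fin n) (Fin n) ℂ :=
  Matrix.of fun i j => wdz (wdz (cplx u) j) i z

/-- `u^{ij̄}`, the entries of the inverse of the complex Hessian, with the convention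
`∑_j u^{ij̄} u_{kj̄} = δ_{ik}`. -/
def uInv {n : ℕ} (u : (Fin n → ℂ) → ℝ) (z : Fin n → ℂ) (i j : Fin n) : ℂ :=
  (hessA u z)⁻¹ j i

/-- Entrywise Wirtinger derivative `∂_i` of a matrix-valued function. -/
def mwdz {n : ℕ} (F : (Fin n → ℂ) → Matrix (Fin n) (Fin n) ℂ) (i : Fin n) (z : Fin n → ℂ) :
    Matrix (Fin n) (Fin n) ℂ :=
  Matrix.of fun p q => wdz (fun w => F w p q) i z

/-- Entrywise Wirtinger derivative `∂_{j̄}` of a matrix-valued function. -/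
def mwdzbar {n : ℕ} (F : (Fin n → ℂ) → Matrix (Fin n) (Fin n) ℂ) (j : Fin n) (z : Fin n → ℂ) :
    Matrix (Fin n) (Fin n) ℂ :=
  Matrix.of fun p q => wdzbar (fun w => F w p q) j z

/-- Entrywise complex conjugate of a matrix. -/
def mconj {n : ℕ} (M : Matrix (Fin n) (Fin n) ℂ) : Matrix (Fin n) (Fin n) ℂ :=
  M.map (starRingEnd ℂ)

/-- The real coordinate directions `x_1, …, x_n, y_1, …, y_n` of `ℂⁿ`. -/
def realDir {n : ℕ} : (Fin n ⊕ Fin n) → (Fin n → ℂ)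
  | Sum.inl j => Pi.single j 1
  | Sum.inr j => Pi.single j Complex.I

/-- The real Hessian of `u : ℂⁿ → ℝ` in the coordinates `(x_1,…,x_n,y_1,…,y_n)`. -/
def realHess {n : ℕ} (u : (Fin n → ℂ) → ℝ) (z : Fin n → ℂ) :
    Matrix (Fin n ⊕ Fin n) (Fin n ⊕ Fin n) ℝ :=
  Matrix.of fun a b => fderiv ℝ (fun w => fderiv ℝ u w (realDir b)) z (realDir a)

/-!
Since `det A = e^{(n+1)u}`, Jacobi's formula gives `tr (A⁻¹ ∂_q A) = (n+1) u_q` on `Ω`; applying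
`∂_p` and using `∂_p (A⁻¹) = -A⁻¹ (∂_p A) A⁻¹` gives the scalar identity
`tr (A⁻¹ ∂_p∂_q A) = tr (A⁻¹ (∂_p A) A⁻¹ (∂_q A)) + (n+1) u_{pq}`.
Because mixed partial derivatives of `u` commute, `(∂_i∂_{j̄} B)_{pq} = (∂_p∂_q A)_{ij}`,
`(∂_i A)_{pk} = (∂_p A)_{ik}` and `(∂_{j̄} B)_{lq} = (∂_q A)_{lj}`, so contracting with `u^{ij̄}`
turns the `(p, q)` entries of the two sides of the matrix identity into the two sides of the
scalar one.
-/

open scoped ContDiff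

theorem Matrix.adjugate_eq_det_smul_inv {ι K : Type*} [Fintype ι] [DecidableEq ι] [Field K]
    {A : Matrix ι ι K} (h : A.det ≠ 0) :
    adjugate A = A.det • A⁻¹ := by
  rw [Matrix.inv_def, smul_smul, Ring.inverse_eq_inv', mul_inv_cancel₀ h, one_smul]

/-- The left side is the derivative of the Leibniz expansion of `det N` in the direction `D`. -/
theorem Matrix.sum_sign_mul_sum_prod_erase_mul {ι R : Type*} [Fintype ι] [DecidableEq ι]
    [CommRing R] (N D : Matrix ι ι R) :
    ∑ σ : Equiv.Perm ι,
        (Equiv.Perm.sign σ : R) * ∑ i, (∏ k ∈ Finset.univ.erase i, N (σ k) k) * D (σ i) i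
      = (adjugate N * D).trace := by
  have hcol (σ : Equiv.Perm ι) (i : ι) :
      (∏ k ∈ Finset.univ.erase i, N (σ k) k) * D (σ i) i
        = ∏ k, N.updateCol i (fun r => D r i) (σ k) k := by
    rw [← Finset.prod_erase_mul _ _ (Finset.mem_univ i), updateCol_self]
    congr 1
    exact Finset.prod_congr rfl fun k hk => by rw [updateCol_ne (Finset.ne_of_mem_erase hk)]
  calc _ = ∑ i, (N.updateCol i (fun r => D r i)).det := by
        simp only [hcol, det_apply', Finset.mul_sum]
        exact Finset.sum_comm
    _ = ∑ i, ∑ r, adjugate N i r * D r i := by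
        simp only [← cramer_apply, cramer_eq_adjugate_mulVec, mulVec, dotProduct]
    _ = (adjugate N * D).trace := by simp only [trace, diag, mul_apply]

theorem Matrix.sum_sum_smul_apply_eq_trace {ι κ R : Type*} [Fintype ι] [CommSemiring R]
    (C : Matrix ι ι R) (X : ι → ι → Matrix κ κ R) (p q : κ) :
    (∑ i, ∑ j, C j i • X i j) p q = (C * of fun i j => X i j p q).trace := by
  simp only [sum_apply, Matrix.smul_apply, smul_eq_mul, trace, diag, mul_apply, of_apply]
  exact Finset.sum_comm

theorem Matrix.mul_mul_apply_eq_of_symm {ι R : Type*} [Fintype ι] [CommSemiring R]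
    {F G : ι → Matrix ι ι R} (C : Matrix ι ι R) (hF : ∀ i p k, F i p k = F p i k)
    (hG : ∀ j l q, G j l q = F q l j) (i j p q : ι) :
    (F i * C * G j) p q = (F p * C * F q) i j := by
  simp only [mul_apply, hG, hF i]

section WirtingerCalculus

variable {n : ℕ} {f g : (Fin n → ℂ) → ℂ} {z : Fin n → ℂ}

theorem HasFDerivAt.wdz_eq {L : (Fin n → ℂ) →L[ℝ] ℂ} (hf : HasFDerivAt f L z)
    (j : Fin n) : wdz f j z = (L (Pi.single j 1) - I * L (Pi.single j I)) / 2 := by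
  rw [wdz, hf.fderiv]

theorem Filter.EventuallyEq.wdz_eq (h : f =ᶠ[nhds z] g) (j : Fin n) :
    wdz f j z = wdz g j z := by
  rw [wdz, wdz, h.fderiv_eq]

theorem wdz_const (c : ℂ) (j : Fin n) : wdz (fun _ => c) j z = 0 := by
  simp [(hasFDerivAt_const c z).wdz_eq]

theorem wdz_mul (hf : DifferentiableAt ℝ f z) (hg : DifferentiableAt ℝ g z) (j : Fin n) :
    wdz (fun w => f w * g w) j z = wdz f j z * g z + f z * wdz g j z := by
  rw [(hf.hasFDerivAt.fun_mul hg.hasFDerivAt).wdz_eq, hf.hasFDerivAt.wdz_eq,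
    hg.hasFDerivAt.wdz_eq]
  simp only [_root_.add_apply, _root_.smul_apply, smul_eq_mul]
  ring

theorem wdz_const_mul (hf : DifferentiableAt ℝ f z) (c : ℂ) (j : Fin n) :
    wdz (fun w => c * f w) j z = c * wdz f j z := by
  simp [wdz_mul (differentiableAt_const c) hf, wdz_const]

theorem wdz_sum {ι : Type*} {s : Finset ι} {f : ι → (Fin n → ℂ) → ℂ}
    (hf : ∀ i ∈ s, DifferentiableAt ℝ (f i) z) (j : Fin n) :
    wdz (fun w => ∑ i ∈ s, f i w) j z = ∑ i ∈ s, wdz (f i) j z := by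
  rw [(HasFDerivAt.fun_sum fun i hi => (hf i hi).hasFDerivAt).wdz_eq]
  simp only [_root_.sum_apply, Finset.mul_sum, ← Finset.sum_sub_distrib,
    Finset.sum_div]
  exact Finset.sum_congr rfl fun i hi => ((hf i hi).hasFDerivAt.wdz_eq j).symm

theorem wdz_prod {ι : Type*} [DecidableEq ι] {s : Finset ι} {f : ι → (Fin n → ℂ) → ℂ}
    (hf : ∀ i ∈ s, DifferentiableAt ℝ (f i) z) (j : Fin n) :
    wdz (fun w => ∏ i ∈ s, f i w) j z
      = ∑ i ∈ s, (∏ k ∈ s.erase i, f k z) * wdz (f i) j z := by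
  rw [(HasFDerivAt.finsetProd fun i hi => (hf i hi).hasFDerivAt).wdz_eq]
  simp only [_root_.sum_apply, _root_.smul_apply, smul_eq_mul,
    Finset.mul_sum, ← Finset.sum_sub_distrib, Finset.sum_div]
  refine Finset.sum_congr rfl fun i hi => ?_
  rw [(hf i hi).hasFDerivAt.wdz_eq]
  ring

theorem wdz_cexp (hf : DifferentiableAt ℝ f z) (j : Fin n) :
    wdz (fun w => Complex.exp (f w)) j z = Complex.exp (f z) * wdz f j z := by
  rw [hf.hasFDerivAt.cexp.wdz_eq, hf.hasFDerivAt.wdz_eq]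
  simp only [_root_.smul_apply, smul_eq_mul]
  ring

/-- `(∂/∂x_j + c ∂/∂y_j) / 2`: `c = -I` gives `∂_j` and `c = I` gives `∂_{j̄}`. -/
def wirtinger (c : ℂ) (f : (Fin n → ℂ) → ℂ) (j : Fin n) (z : Fin n → ℂ) : ℂ :=
  (fderiv ℝ f z (Pi.single j 1) + c * fderiv ℝ f z (Pi.single j I)) / 2

theorem wdz_eq_wirtinger (f : (Fin n → ℂ) → ℂ) (j : Fin n) :
    wdz f j = wirtinger (-I) f j := by
  funext z
  simp only [wdz, wirtinger, neg_mul, sub_eq_add_neg]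

theorem wdzbar_eq_wirtinger (f : (Fin n → ℂ) → ℂ) (j : Fin n) :
    wdzbar f j = wirtinger I f j :=
  rfl

theorem wirtinger_wirtinger_comm (hf : ContDiffAt ℝ 2 f z) (c d : ℂ) (j k : Fin n) :
    wirtinger c (wirtinger d f k) j z = wirtinger d (wirtinger c f j) k z := by
  set D2 := fderiv ℝ (fderiv ℝ f) z
  have hD : DifferentiableAt ℝ (fderiv ℝ f) z :=
    (hf.fderiv_right (m := 1) le_rfl).differentiableAt one_ne_zero
  have happly (v : Fin n → ℂ) :
      HasFDerivAt (fun x => fderiv ℝ f x v) ((ContinuousLinearMap.apply ℝ ℂ v).comp D2) z :=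
    (ContinuousLinearMap.apply ℝ ℂ v).hasFDerivAt.comp z hD.hasFDerivAt
  have hwirt (c : ℂ) (j : Fin n) (v : Fin n → ℂ) : fderiv ℝ (wirtinger c f j) z v
      = (D2 v (Pi.single j 1) + c * D2 v (Pi.single j I)) / 2 := by
    have h := HasFDerivAt.mul_const
      ((happly (Pi.single j 1)).fun_add ((happly (Pi.single j I)).const_mul c)) (1 / 2 : ℂ)
    rw [show wirtinger c f j = fun x => _ from funext fun x => div_eq_mul_one_div _ _, h.fderiv]
    simp only [_root_.smul_apply, _root_.add_apply, ContinuousLinearMap.coe_comp,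
      Function.comp_apply, ContinuousLinearMap.apply_apply, smul_eq_mul]
    ring
  have hsymm (v w : Fin n → ℂ) : D2 v w = D2 w v := hf.isSymmSndFDerivAt (by simp) v w
  simp only [wirtinger, hwirt, hsymm (Pi.single k _) (Pi.single j _)]
  ring

theorem wdz_wdz_comm (hf : ContDiffAt ℝ 2 f z) (j k : Fin n) :
    wdz (wdz f k) j z = wdz (wdz f j) k z := by
  simp only [wdz_eq_wirtinger]
  exact wirtinger_wirtinger_comm hf _ _ j k

theorem wdz_wdzbar_comm (hf : ContDiffAt ℝ 2 f z) (j k : Fin n) :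
    wdz (wdzbar f k) j z = wdzbar (wdz f j) k z := by
  simp only [wdz_eq_wirtinger, wdzbar_eq_wirtinger]
  exact wirtinger_wirtinger_comm hf _ _ j k

end WirtingerCalculus

section OnOpen

variable {n : ℕ} {Ω : Set (Fin n → ℂ)} {f g : (Fin n → ℂ) → ℂ}

theorem ContDiffOn.wdz (hf : ContDiffOn ℝ ∞ f Ω) (hΩ : IsOpen Ω) (j : Fin n) :
    ContDiffOn ℝ ∞ (wdz f j) Ω := by
  have hD := hf.fderiv_of_isOpen hΩ (m := ∞) le_rfl
  exact ((hD.clm_apply contDiffOn_const).sub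
    (contDiffOn_const.mul (hD.clm_apply contDiffOn_const))).div_const 2

theorem ContDiffOn.wdzbar (hf : ContDiffOn ℝ ∞ f Ω) (hΩ : IsOpen Ω) (j : Fin n) :
    ContDiffOn ℝ ∞ (wdzbar f j) Ω := by
  have hD := hf.fderiv_of_isOpen hΩ (m := ∞) le_rfl
  exact ((hD.clm_apply contDiffOn_const).add
    (contDiffOn_const.mul (hD.clm_apply contDiffOn_const))).div_const 2

theorem eqOn_wdz (h : Set.EqOn f g Ω) (hΩ : IsOpen Ω) (j : Fin n) :
    Set.EqOn (wdz f j) (wdz g j) Ω := fun _ hz =>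
  (Filter.eventuallyEq_of_mem (hΩ.mem_nhds hz) h).wdz_eq j

theorem wdz_wdz_eqOn (hf : ContDiffOn ℝ ∞ f Ω) (hΩ : IsOpen Ω) (j k : Fin n) :
    Set.EqOn (wdz (wdz f k) j) (wdz (wdz f j) k) Ω := fun _ hz =>
  wdz_wdz_comm ((hf.contDiffAt (hΩ.mem_nhds hz)).of_le ENat.LEInfty.out) j k

theorem wdzbar_wdz_eqOn (hf : ContDiffOn ℝ ∞ f Ω) (hΩ : IsOpen Ω) (j k : Fin n) :
    Set.EqOn (wdzbar (wdz f j) k) (wdz (wdzbar f k) j) Ω := fun _ hz =>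
  (wdz_wdzbar_comm ((hf.contDiffAt (hΩ.mem_nhds hz)).of_le ENat.LEInfty.out) j k).symm

theorem wdz_wdz_const_mul (hf : ContDiffOn ℝ ∞ f Ω) (hΩ : IsOpen Ω) (c : ℂ)
    {z : Fin n → ℂ} (hz : z ∈ Ω) (j k : Fin n) :
    wdz (wdz (fun w => c * f w) k) j z = c * wdz (wdz f k) j z := by
  have hdiff {h : (Fin n → ℂ) → ℂ} (hh : ContDiffOn ℝ ∞ h Ω) {w} (hw : w ∈ Ω) :
      DifferentiableAt ℝ h w :=
    (hh.differentiableOn (by simp)).differentiableAt (hΩ.mem_nhds hw)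
  rw [(eqOn_wdz (fun w hw => wdz_const_mul (hdiff hf hw) c k) hΩ j) hz,
    wdz_const_mul (hdiff (hf.wdz hΩ k) hz)]

end OnOpen

section MatrixCalculus

variable {n : ℕ} {M N : (Fin n → ℂ) → Matrix (Fin n) (Fin n) ℂ} {z : Fin n → ℂ}

theorem Filter.EventuallyEq.mwdz_eq (h : M =ᶠ[nhds z] N) (j : Fin n) :
    mwdz M j z = mwdz N j z := by
  ext p q
  exact (h.fun_comp fun A => A p q).wdz_eq j

theorem mwdz_const (C : Matrix (Fin n) (Fin n) ℂ) (j : Fin n) : mwdz (fun _ => C) j z = 0 := by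
  ext p q
  exact wdz_const _ j

theorem mwdz_mul (hM : ∀ p q, DifferentiableAt ℝ (fun w => M w p q) z)
    (hN : ∀ p q, DifferentiableAt ℝ (fun w => N w p q) z) (j : Fin n) :
    mwdz (fun w => M w * N w) j z = mwdz M j z * N z + M z * mwdz N j z := by
  ext p q
  simp only [mwdz, mul_apply, Matrix.add_apply, of_apply, ← Finset.sum_add_distrib]
  rw [wdz_sum fun k _ => (hM p k).fun_mul (hN k q)]
  exact Finset.sum_congr rfl fun k _ => wdz_mul (hM p k) (hN k q) j

theorem wdz_trace (hM : ∀ p q, DifferentiableAt ℝ (fun w => M w p q) z) (j : Fin n) :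
    wdz (fun w => (M w).trace) j z = (mwdz M j z).trace :=
  wdz_sum (fun p _ => hM p p) j

theorem differentiableAt_det (hM : ∀ p q, DifferentiableAt ℝ (fun w => M w p q) z) :
    DifferentiableAt ℝ (fun w => (M w).det) z := by
  simp only [det_apply']
  exact .fun_sum fun σ _ =>
    ((HasFDerivAt.finsetProd fun i _ => (hM (σ i) i).hasFDerivAt).differentiableAt).const_mul _

theorem wdz_det (hM : ∀ p q, DifferentiableAt ℝ (fun w => M w p q) z) (j : Fin n) :
    wdz (fun w => (M w).det) j z = (adjugate (M z) * mwdz M j z).trace := by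
  have hprod (σ : Equiv.Perm (Fin n)) : DifferentiableAt ℝ (fun w => ∏ i, M w (σ i) i) z :=
    (HasFDerivAt.finsetProd fun i _ => (hM (σ i) i).hasFDerivAt).differentiableAt
  simp only [det_apply']
  rw [wdz_sum fun σ _ => (hprod σ).const_mul _, ← sum_sign_mul_sum_prod_erase_mul]
  refine Finset.sum_congr rfl fun σ _ => ?_
  rw [wdz_const_mul (hprod σ), wdz_prod fun i _ => hM (σ i) i]
  rfl

theorem differentiableAt_inv_apply (hM : ∀ p q, DifferentiableAt ℝ (fun w => M w p q) z)
    (hdet : (M z).det ≠ 0) (s t : Fin n) : DifferentiableAt ℝ (fun w => (M w)⁻¹ s t) z := by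
  have hinv : (fun w => (M w)⁻¹ s t)
      = fun w => ((M w).det)⁻¹ * ((M w).updateRow t (Pi.single s 1)).det := by
    funext w
    rw [Matrix.inv_def, Matrix.smul_apply, adjugate_apply, Ring.inverse_eq_inv', smul_eq_mul]
  rw [hinv]
  refine ((differentiableAt_det hM).inv hdet).mul (differentiableAt_det fun p q => ?_)
  simp only [updateRow_apply]
  split_ifs
  · exact differentiableAt_const _
  · exact hM p q

theorem mwdz_inv (hM : ∀ p q, DifferentiableAt ℝ (fun w => M w p q) z)
    (hdet : ∀ᶠ w in nhds z, (M w).det ≠ 0) (j : Fin n) :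
    mwdz (fun w => (M w)⁻¹) j z = -((M z)⁻¹ * mwdz M j z * (M z)⁻¹) := by
  have hunit : IsUnit (M z).det := isUnit_iff_ne_zero.mpr hdet.self_of_nhds
  have hsum : mwdz M j z * (M z)⁻¹ + M z * mwdz (fun w => (M w)⁻¹) j z = 0 := by
    rw [← mwdz_mul hM (differentiableAt_inv_apply hM hdet.self_of_nhds), ← mwdz_const 1 j]
    exact Filter.EventuallyEq.mwdz_eq
      (hdet.mono fun w hw => mul_nonsing_inv _ (isUnit_iff_ne_zero.mpr hw)) j
  calc mwdz (fun w => (M w)⁻¹) j z = (M z)⁻¹ * (M z * mwdz (fun w => (M w)⁻¹) j z) := by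
        rw [← Matrix.mul_assoc, nonsing_inv_mul _ hunit, Matrix.one_mul]
    _ = -((M z)⁻¹ * mwdz M j z * (M z)⁻¹) := by
        rw [eq_neg_of_add_eq_zero_right hsum, Matrix.mul_neg, Matrix.mul_assoc]

end MatrixCalculus

section LogDet

variable {n : ℕ} {Ω : Set (Fin n → ℂ)} {M : (Fin n → ℂ) → Matrix (Fin n) (Fin n) ℂ}
  {g : (Fin n → ℂ) → ℂ} {z : Fin n → ℂ}

theorem trace_inv_mul_mwdz_eq_wdz_of_det_eq_exp (hΩ : IsOpen Ω)
    (hM : ∀ p q, DifferentiableOn ℝ (fun w => M w p q) Ω) (hg : DifferentiableOn ℝ g Ω)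
    (hdet : ∀ w ∈ Ω, (M w).det = Complex.exp (g w)) (hz : z ∈ Ω) (j : Fin n) :
    ((M z)⁻¹ * mwdz M j z).trace = wdz g j z := by
  have hdetz : (M z).det ≠ 0 := by rw [hdet z hz]; exact Complex.exp_ne_zero _
  refine mul_left_cancel₀ hdetz ?_
  calc (M z).det * ((M z)⁻¹ * mwdz M j z).trace = (adjugate (M z) * mwdz M j z).trace := by
        rw [adjugate_eq_det_smul_inv hdetz, Matrix.smul_mul, trace_smul, smul_eq_mul]
    _ = wdz (fun w => (M w).det) j z :=
        (wdz_det (fun p q => (hM p q).differentiableAt (hΩ.mem_nhds hz)) j).symm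
    _ = wdz (fun w => Complex.exp (g w)) j z :=
        (Filter.eventuallyEq_of_mem (hΩ.mem_nhds hz) hdet).wdz_eq j
    _ = (M z).det * wdz g j z := by
        rw [wdz_cexp (hg.differentiableAt (hΩ.mem_nhds hz)), hdet z hz]

theorem trace_inv_mul_mwdz_mwdz_of_det_eq_exp (hΩ : IsOpen Ω)
    (hM : ∀ p q, ContDiffOn ℝ ∞ (fun w => M w p q) Ω) (hg : DifferentiableOn ℝ g Ω)
    (hdet : ∀ w ∈ Ω, (M w).det = Complex.exp (g w)) (hz : z ∈ Ω) (j k : Fin n) :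
    ((M z)⁻¹ * mwdz (mwdz M k) j z).trace
      = ((M z)⁻¹ * mwdz M j z * (M z)⁻¹ * mwdz M k z).trace + wdz (wdz g k) j z := by
  have hMz (p q : Fin n) : DifferentiableAt ℝ (fun w => M w p q) z :=
    ((hM p q).differentiableOn (by simp)).differentiableAt (hΩ.mem_nhds hz)
  have hdMz (p q : Fin n) : DifferentiableAt ℝ (fun w => mwdz M k w p q) z :=
    (((hM p q).wdz hΩ k).differentiableOn (by simp)).differentiableAt (hΩ.mem_nhds hz)
  have hdet_ne : ∀ᶠ w in nhds z, (M w).det ≠ 0 :=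
    Filter.eventually_of_mem (hΩ.mem_nhds hz) fun w hw => by
      rw [hdet w hw]; exact Complex.exp_ne_zero _
  have hinv := differentiableAt_inv_apply hMz hdet_ne.self_of_nhds
  have hprod (p q : Fin n) :
      DifferentiableAt ℝ (fun w => ((M w)⁻¹ * mwdz M k w) p q) z := by
    simp only [mul_apply]
    exact .fun_sum fun l _ => (hinv p l).mul (hdMz l q)
  have hfirst : wdz (fun w => ((M w)⁻¹ * mwdz M k w).trace) j z = wdz (wdz g k) j z :=
    (Filter.eventuallyEq_of_mem (hΩ.mem_nhds hz) fun w hw =>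
      trace_inv_mul_mwdz_eq_wdz_of_det_eq_exp hΩ (fun p q => (hM p q).differentiableOn (by simp))
        hg hdet hw k).wdz_eq j
  rw [wdz_trace hprod, mwdz_mul hinv hdMz, mwdz_inv hMz hdet_ne, Matrix.trace_add,
    Matrix.neg_mul, trace_neg] at hfirst
  linear_combination hfirst

end LogDet

section Potential

variable {n : ℕ} {Ω : Set (Fin n → ℂ)} {u : (Fin n → ℂ) → ℝ}

theorem ContDiffOn.cplx (hu : ContDiffOn ℝ ∞ u Ω) : ContDiffOn ℝ ∞ (cplx u) Ω :=
  Complex.ofRealCLM.contDiff.comp_contDiffOn hu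

theorem contDiffOn_hessA_apply (hΩ : IsOpen Ω) (hu : ContDiffOn ℝ ∞ u Ω) (i j : Fin n) :
    ContDiffOn ℝ ∞ (fun w => hessA u w i j) Ω :=
  (hu.cplx.wdzbar hΩ j).wdz hΩ i

theorem mwdz_hessA_apply_comm (hΩ : IsOpen Ω) (hu : ContDiffOn ℝ ∞ u Ω) {z : Fin n → ℂ}
    (hz : z ∈ Ω) (i p k : Fin n) : mwdz (hessA u) i z p k = mwdz (hessA u) p z i k :=
  wdz_wdz_eqOn (hu.cplx.wdzbar hΩ k) hΩ i p hz

theorem mwdzbar_hessB_eqOn (hΩ : IsOpen Ω) (hu : ContDiffOn ℝ ∞ u Ω) (j l q : Fin n) :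
    Set.EqOn (fun w => mwdzbar (hessB u) j w l q) (fun w => mwdz (hessA u) q w l j) Ω :=
  ((wdzbar_wdz_eqOn (hu.cplx.wdz hΩ q) hΩ l j).trans
    (eqOn_wdz (wdzbar_wdz_eqOn hu.cplx hΩ q j) hΩ l)).trans
    (wdz_wdz_eqOn (hu.cplx.wdzbar hΩ j) hΩ l q)

theorem mwdz_mwdzbar_hessB_eqOn (hΩ : IsOpen Ω) (hu : ContDiffOn ℝ ∞ u Ω) (i j p q : Fin n) :
    Set.EqOn (fun w => mwdz (mwdzbar (hessB u) j) i w p q)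
      (fun w => mwdz (mwdz (hessA u) q) p w i j) Ω := by
  have hh := hu.cplx.wdzbar hΩ j
  exact (((eqOn_wdz (mwdzbar_hessB_eqOn hΩ hu j p q) hΩ i).trans
    (wdz_wdz_eqOn (hh.wdz hΩ p) hΩ i q)).trans
    (eqOn_wdz (wdz_wdz_eqOn hh hΩ i p) hΩ q)).trans (wdz_wdz_eqOn (hh.wdz hΩ i) hΩ q p)

end Potential

theorem laplacian_B_eq_AB_general (n : ℕ) (Ω : Set (Fin n → ℂ)) (hΩ : IsOpen Ω)
    (u : (Fin n → ℂ) → ℝ) (hu : ContDiffOn ℝ (⊤ : ℕ∞) u Ω)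
    (hKE : ∀ z ∈ Ω, (hessA u z).det = (Real.exp ((n + 1) * u z) : ℂ)) :
    ∀ z ∈ Ω,
      ∑ i, ∑ j, uInv u z i j • mwdz (mwdzbar (hessB u) j) i z
        = (∑ i, ∑ j, uInv u z i j •
            (mwdz (hessA u) i z * (hessA u z)⁻¹ * mwdzbar (hessB u) j z))
          + ((n : ℂ) + 1) • hessB u z := by
  intro z hz
  have hdet : ∀ w ∈ Ω, (hessA u w).det = Complex.exp (((n : ℂ) + 1) * cplx u w) := by
    intro w hw
    rw [hKE w hw, cplx]
    push_cast
    rfl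
  have hlog := trace_inv_mul_mwdz_mwdz_of_det_eq_exp hΩ (contDiffOn_hessA_apply hΩ hu)
    ((contDiffOn_const.mul hu.cplx).differentiableOn (by simp)) hdet hz
  ext p q
  simp only [uInv]
  rw [Matrix.add_apply, sum_sum_smul_apply_eq_trace, sum_sum_smul_apply_eq_trace,
    Matrix.smul_apply, smul_eq_mul]
  have hlhs : (of fun i j => mwdz (mwdzbar (hessB u) j) i z p q)
      = mwdz (mwdz (hessA u) q) p z := by
    ext i j
    rw [of_apply]
    exact (mwdz_mwdzbar_hessB_eqOn hΩ hu i j p q hz :)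
  have hrhs : (of fun i j => (mwdz (hessA u) i z * (hessA u z)⁻¹ * mwdzbar (hessB u) j z) p q)
      = mwdz (hessA u) p z * (hessA u z)⁻¹ * mwdz (hessA u) q z := by
    ext i j
    rw [of_apply]
    exact mul_mul_apply_eq_of_symm _ (mwdz_hessA_apply_comm hΩ hu hz)
      (fun j l q => mwdzbar_hessB_eqOn hΩ hu j l q hz) i j p q
  rw [hlhs, hrhs, hlog p q, wdz_wdz_const_mul hu.cplx hΩ _ hz]
  simp only [Matrix.mul_assoc, hessB, of_apply]

theorem laplacian_B_eq_AB (n : ℕ) (Ω : Set (Fin n → ℂ)) (hΩ : IsOpen Ω)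
    (u : (Fin n → ℂ) → ℝ) (hu : ContDiffOn ℝ (⊤ : ℕ∞) u Ω)
    (hpsh : ∀ z ∈ Ω, (hessA u z).PosDef)
    (hKE : ∀ z ∈ Ω, (hessA u z).det = (Real.exp ((n + 1) * u z) : ℂ)) :
    ∀ z ∈ Ω,
      ∑ i, ∑ j, uInv u z i j • mwdz (mwdzbar (hessB u) j) i z
        = (∑ i, ∑ j, uInv u z i j •
            (mwdz (hessA u) i z * (hessA u z)⁻¹ * mwdzbar (hessB u) j z))
          + ((n : ℂ) + 1) • hessB u z :=
  laplacian_B_eq_AB_general n Ω hΩ u hu hKE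

end
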